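/- arXiv:2211.12430 — 2 statements merged into one kernel-verified Lean document; each statement's English description precedes it below -/
import Mathlib

section
/- Let $a,c \in \mathbb{C}$, $a \neq 0$, $\beta = (5+2\sqrt{5})/4$, and suppose $|c| > \beta(1+|a|)^2$. Set $\delta = (1+|a|)/2$. Then there exists $R$ with $R_1 < R < |c|/(1+|a|)$ (where $R_1 = \frac{1+|a|+\sqrt{(1+|a|)^2+4|c|}}{2}$) such that for all $x,y \in \mathbb{C}$ with $|x| \le \delta$ and $|y| \le R$ one has $|x^2 + c - ay| > R$. -/
/-!
For `‖x‖ ≤ A / 2` and `‖y‖ ≤ R`, where `A = 1 + ‖a‖`, the reverse triangle inequality gives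
`‖x ^ 2 + c - a * y‖ ≥ ‖c‖ - A ^ 2 / 4 - ‖a‖ R`, which exceeds `R` exactly when
`R < (‖c‖ - A ^ 2 / 4) / A`. Any `R` strictly between the radius `R₁` and this bound works, and
the interval is nonempty precisely when `4 ‖c‖ ^ 2 - 10 A ^ 2 ‖c‖ + 5 A ^ 4 / 4 > 0`, i.e. when
`‖c‖ / A ^ 2` lies beyond the larger root `(5 + 2 √5) / 4` of `4 t ^ 2 - 10 t + 5 / 4`.
-/

lemma norm_sub_sq_sub_mul_le_norm_sq_add_sub_mul {R : Type*} [SeminormedRing R] (a c x y : R) :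
    ‖c‖ - ‖x‖ ^ 2 - ‖a‖ * ‖y‖ ≤ ‖x ^ 2 + c - a * y‖ := by
  have hc : c = (x ^ 2 + c - a * y) - x ^ 2 + a * y := by abel
  have htri : ‖c‖ ≤ ‖x ^ 2 + c - a * y‖ + ‖x ^ 2‖ + ‖a * y‖ :=
    calc ‖c‖ = ‖(x ^ 2 + c - a * y) - x ^ 2 + a * y‖ := congrArg _ hc
      _ ≤ ‖(x ^ 2 + c - a * y) - x ^ 2‖ + ‖a * y‖ := norm_add_le _ _
      _ ≤ ‖x ^ 2 + c - a * y‖ + ‖x ^ 2‖ + ‖a * y‖ := by gcongr; exact norm_sub_le _ _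
  linarith [norm_pow_le' x two_pos, norm_mul_le a y]

lemma quartic_pos_of_gt_root_mul_sq {A C : ℝ} (hC : (5 + 2 * √5) / 4 * A ^ 2 < C) :
    0 < 4 * C ^ 2 - 10 * A ^ 2 * C + 5 * A ^ 4 / 4 := by
  have h5 : √5 ^ 2 = 5 := Real.sq_sqrt (by norm_num)
  have hfactor : 4 * C ^ 2 - 10 * A ^ 2 * C + 5 * A ^ 4 / 4
      = 4 * ((C - (5 + 2 * √5) / 4 * A ^ 2) * (C - (5 - 2 * √5) / 4 * A ^ 2)) := by
    linear_combination A ^ 4 * h5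
  have hsmaller : 0 < C - (5 - 2 * √5) / 4 * A ^ 2 := by
    nlinarith [mul_nonneg (Real.sqrt_nonneg 5) (sq_nonneg A)]
  rw [hfactor]
  have := mul_pos (sub_pos.mpr hC) hsmaller
  positivity

lemma half_add_sqrt_lt_of_gt_root_mul_sq {A C : ℝ} (hA : 0 < A)
    (hC : (5 + 2 * √5) / 4 * A ^ 2 < C) :
    (A + √(A ^ 2 + 4 * C)) / 2 < (C - A ^ 2 / 4) / A := by
  have hquartic := quartic_pos_of_gt_root_mul_sq hC
  have hC0 : 0 < C := lt_of_le_of_lt (by positivity) hC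
  set s := √(A ^ 2 + 4 * C)
  have hs : s ^ 2 = A ^ 2 + 4 * C := Real.sq_sqrt (by positivity)
  have hK : 0 < 2 * C - 3 * A ^ 2 / 2 := by
    nlinarith [mul_nonneg (Real.sqrt_nonneg 5) (sq_nonneg A)]
  have hAs : A * s < 2 * C - 3 * A ^ 2 / 2 := by
    refine lt_of_pow_lt_pow_left₀ 2 hK.le ?_
    calc (A * s) ^ 2 = A ^ 2 * (A ^ 2 + 4 * C) := by rw [mul_pow, hs]
      _ < (2 * C - 3 * A ^ 2 / 2) ^ 2 := by linarith
  rw [lt_div_iff₀ hA]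
  linarith

theorem stmt1_general (a c : ℂ)
    (hc : ‖c‖ > (5 + 2 * Real.sqrt 5) / 4 * (1 + ‖a‖) ^ 2) :
    ∃ R : ℝ,
      (1 + ‖a‖ + Real.sqrt ((1 + ‖a‖) ^ 2 + 4 * ‖c‖)) / 2 < R ∧
      R < ‖c‖ / (1 + ‖a‖) ∧
      ∀ x y : ℂ, ‖x‖ ≤ (1 + ‖a‖) / 2 → ‖y‖ ≤ R →
        ‖x ^ 2 + c - a * y‖ > R := by
  set A := 1 + ‖a‖
  have hA : 0 < A := by positivity
  obtain ⟨R, hR₁R, hRM⟩ := exists_between (half_add_sqrt_lt_of_gt_root_mul_sq hA hc)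
  have hRA : R * A < ‖c‖ - A ^ 2 / 4 := (lt_div_iff₀ hA).mp hRM
  have hRc : R < ‖c‖ / A := (lt_div_iff₀ hA).mpr (by linarith [pow_pos hA 2])
  refine ⟨R, hR₁R, hRc, fun x y hx hy => ?_⟩
  have hx2 : ‖x‖ ^ 2 ≤ A ^ 2 / 4 := by nlinarith [norm_nonneg x]
  have hay : ‖a‖ * ‖y‖ ≤ ‖a‖ * R := mul_le_mul_of_nonneg_left hy (norm_nonneg a)
  linarith [norm_sub_sq_sub_mul_le_norm_sq_add_sub_mul a c x y]

theorem stmt1 (a c : ℂ) (ha : a ≠ 0)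
    (hc : ‖c‖ > (5 + 2 * Real.sqrt 5) / 4 * (1 + ‖a‖) ^ 2) :
    ∃ R : ℝ,
      (1 + ‖a‖ + Real.sqrt ((1 + ‖a‖) ^ 2 + 4 * ‖c‖)) / 2 < R ∧
      R < ‖c‖ / (1 + ‖a‖) ∧
      ∀ x y : ℂ, ‖x‖ ≤ (1 + ‖a‖) / 2 → ‖y‖ ≤ R →
        ‖x ^ 2 + c - a * y‖ > R :=
  stmt1_general a c hc
end

section
/- Let $0<\gamma_2<\gamma_1<1$ and $\beta = \frac{2(\gamma_1^2+\gamma_2^2)}{(\gamma_1^2-\gamma_2^2)^2}$, and let $a, c \in \mathbb{C}$ with $|c| > \beta(1+|a|)^2$. Then with $c_0 = 4|c|/(1+|a|)^2$ we have $c_0 > \frac{8(\gamma_1^2+\gamma_2^2)}{(\gamma_1^2-\gamma_2^2)^2}$ and consequently $2\sqrt{1+c_0\gamma_1^2}\sqrt{1+c_0\gamma_2^2} \le c_0(\gamma_1^2+\gamma_2^2) - 2$. -/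
/-! Write `p = γ₁²`, `q = γ₂²` and `x = c₀`. Both sides of the second inequality are nonnegative, and
`(x (p + q) - 2)² - 4 (1 + x p) (1 + x q) = x (x (p - q)² - 8 (p + q))`,
so squaring reduces it to the first inequality, which is the hypothesis on `|c|` divided by `(1 + |a|)²`. -/

lemma two_le_mul_add_of_lt_mul_sub_sq {p q x : ℝ} (hp : 0 ≤ p) (hq : 0 ≤ q) (hx : 0 ≤ x)
    (h : 8 * (p + q) < x * (p - q) ^ 2) : 2 ≤ x * (p + q) := by
  have hsq : x * (p - q) ^ 2 ≤ x * (p + q) ^ 2 := mul_le_mul_of_nonneg_left (by nlinarith) hx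
  nlinarith

lemma two_mul_sqrt_mul_sqrt_le {p q x : ℝ} (hp : 0 ≤ p) (hq : 0 ≤ q) (hx : 0 ≤ x)
    (h : 8 * (p + q) < x * (p - q) ^ 2) :
    2 * √(1 + x * p) * √(1 + x * q) ≤ x * (p + q) - 2 := by
  have hR : 0 ≤ x * (p + q) - 2 := by linarith [two_le_mul_add_of_lt_mul_sub_sq hp hq hx h]
  have hdisc : (x * (p + q) - 2) ^ 2 - 4 * ((1 + x * p) * (1 + x * q)) =
      x * (x * (p - q) ^ 2 - 8 * (p + q)) := by ring
  refine le_of_pow_le_pow_left₀ two_ne_zero hR ?_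
  calc (2 * √(1 + x * p) * √(1 + x * q)) ^ 2
      = 4 * ((1 + x * p) * (1 + x * q)) := by
        rw [mul_pow, mul_pow, Real.sq_sqrt (by positivity), Real.sq_sqrt (by positivity)]; ring
    _ ≤ (x * (p + q) - 2) ^ 2 := by nlinarith

theorem stmt16_general (γ₁ γ₂ : ℝ) (h2 : 0 < γ₂) (h21 : γ₂ < γ₁)
    (a c : ℂ)
    (hc : ‖c‖ > 2 * (γ₁ ^ 2 + γ₂ ^ 2) / (γ₁ ^ 2 - γ₂ ^ 2) ^ 2 * (1 + ‖a‖) ^ 2) :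
    4 * ‖c‖ / (1 + ‖a‖) ^ 2 >
      8 * (γ₁ ^ 2 + γ₂ ^ 2) / (γ₁ ^ 2 - γ₂ ^ 2) ^ 2 ∧
    2 * Real.sqrt (1 + 4 * ‖c‖ / (1 + ‖a‖) ^ 2 * γ₁ ^ 2) *
        Real.sqrt (1 + 4 * ‖c‖ / (1 + ‖a‖) ^ 2 * γ₂ ^ 2) ≤
      4 * ‖c‖ / (1 + ‖a‖) ^ 2 * (γ₁ ^ 2 + γ₂ ^ 2) - 2 := by
  have hgap : 0 < (γ₁ ^ 2 - γ₂ ^ 2) ^ 2 :=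
    pow_pos (sub_pos.2 (pow_lt_pow_left₀ h21 h2.le two_ne_zero)) 2
  have hc₀ : 4 * ‖c‖ / (1 + ‖a‖) ^ 2 > 8 * (γ₁ ^ 2 + γ₂ ^ 2) / (γ₁ ^ 2 - γ₂ ^ 2) ^ 2 := by
    rw [gt_iff_lt, lt_div_iff₀ (by positivity), show 8 * (γ₁ ^ 2 + γ₂ ^ 2) =
      4 * (2 * (γ₁ ^ 2 + γ₂ ^ 2)) by ring, mul_div_assoc, mul_assoc]
    exact mul_lt_mul_of_pos_left hc four_pos
  refine ⟨hc₀, two_mul_sqrt_mul_sqrt_le (by positivity) (by positivity) (by positivity) ?_⟩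
  rwa [gt_iff_lt, div_lt_iff₀ hgap] at hc₀

theorem stmt16 (γ₁ γ₂ : ℝ) (h2 : 0 < γ₂) (h21 : γ₂ < γ₁) (h1 : γ₁ < 1)
    (a c : ℂ)
    (hc : ‖c‖ > 2 * (γ₁ ^ 2 + γ₂ ^ 2) / (γ₁ ^ 2 - γ₂ ^ 2) ^ 2 * (1 + ‖a‖) ^ 2) :
    4 * ‖c‖ / (1 + ‖a‖) ^ 2 >
      8 * (γ₁ ^ 2 + γ₂ ^ 2) / (γ₁ ^ 2 - γ₂ ^ 2) ^ 2 ∧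
    2 * Real.sqrt (1 + 4 * ‖c‖ / (1 + ‖a‖) ^ 2 * γ₁ ^ 2) *
        Real.sqrt (1 + 4 * ‖c‖ / (1 + ‖a‖) ^ 2 * γ₂ ^ 2) ≤
      4 * ‖c‖ / (1 + ‖a‖) ^ 2 * (γ₁ ^ 2 + γ₂ ^ 2) - 2 :=
  stmt16_general γ₁ γ₂ h2 h21 a c hc
end
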